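/- arXiv:1504.01759 — 2 statements merged into one kernel-verified Lean document; each statement's English description precedes it below -/
import Mathlib

section
/- Under the stated assumptions, there is a constant C > 0 (one may take C = e) such that for every n ≥ 1 and every x > 0, the function ℱ_n(x) = ∫_0^x (1 − F_n(y)) dy satisfies ℱ_n(x) ≤ C · x · n · ψ(1 − e^{−1/x}). -/
open MeasureTheory Filter Topology

noncomputable section

/-- Coefficients `c(ψ,k)` of the Bernstein function `ψ` with drift `b` and Lévy measure `ν`:
`c(ψ,k) = (1/k!) ∫ s^k e^{-s} dν(s) + b·[k = 1]`. -/
def bernC (b : ℝ) (ν : Measure ℝ) (k : ℕ) : ℝ :=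
  ((k.factorial : ℝ))⁻¹ * ∫ s in Set.Ioi (0 : ℝ), s ^ k * Real.exp (-s) ∂ν
    + if k = 1 then b else 0

/-- One-step distribution of the discrete subordinator: mass `c k` at `k ≥ 1` and no mass at `0`. -/
def stepPMF (c : ℕ → ℝ) (k : ℕ) : ℝ := if k = 0 then 0 else c k

/-- `tauPMF c n k = P(τ_n = k)`, the `n`-fold convolution of the one-step distribution. -/
def tauPMF (c : ℕ → ℝ) : ℕ → ℕ → ℝ
  | 0, k => if k = 0 then 1 else 0
  | n + 1, k => ∑ j ∈ Finset.range (k + 1), tauPMF c n j * stepPMF c (k - j)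

/-- `cdfTau c n t = F_n(t) = P(τ_n ≤ t)`. -/
def cdfTau (c : ℕ → ℝ) (n : ℕ) (t : ℝ) : ℝ :=
  if t < 0 then 0 else ∑ k ∈ Finset.range (⌊t⌋₊ + 1), tauPMF c n k

/-!
Since `ℱ_n(x) = ∫_0^x P(τ_n > y) dy = E[min(x, τ_n)]` and `min(x, k) ≤ e·x·(1 - q^k)` for
`q = e^{-1/x}`, we get `ℱ_n(x) ≤ e·x·(1 - E[q^{τ_n}]) = e·x·(1 - G(q)^n)`, where
`G(q) = Σ_k c(ψ,k) q^k = 1 - ψ(1 - q)` is the generating function of one step: expand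
`1 - e^{-(1-q)s} = e^{-s} Σ_k s^k (1 - q^k) / k!` under the Lévy integral. Bernoulli's inequality
`1 - (1 - a)^n ≤ n·a` finishes the proof.
-/

open Set Real

lemma min_one_le_exp_one_mul_one_sub_exp_neg {u : ℝ} (hu : 0 ≤ u) :
    min 1 u ≤ exp 1 * (1 - exp (-u)) := by
  have he : exp (-1) * exp 1 = 1 := by rw [← exp_add]; simp
  rcases le_total u 1 with h | h
  · have hmul : u * exp (-u) ≤ 1 - exp (-u) := by
      have := mul_le_mul_of_nonneg_right (add_one_le_exp u) (exp_pos (-u)).le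
      rw [← exp_add, add_neg_cancel, exp_zero] at this
      linarith
    have hexp : exp (-1) ≤ exp (-u) := exp_le_exp.mpr (by linarith)
    calc min 1 u = exp 1 * (u * exp (-1)) := by rw [min_eq_right h]; linear_combination -u * he
      _ ≤ exp 1 * (u * exp (-u)) := by gcongr
      _ ≤ exp 1 * (1 - exp (-u)) := by gcongr
  · have hexp : exp (-u) ≤ exp (-1) := exp_le_exp.mpr (by linarith)
    have h2 : 2 ≤ exp 1 := by linarith [add_one_le_exp (1 : ℝ)]
    rw [min_eq_left h]
    nlinarith

lemma min_le_exp_one_mul_one_sub_exp_neg_inv_pow {x : ℝ} (hx : 0 < x) (k : ℕ) :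
    min x k ≤ exp 1 * x * (1 - exp (-(1 / x)) ^ k) := by
  have hpow : exp (-(1 / x)) ^ k = exp (-(k / x)) := by rw [← exp_nat_mul]; ring_nf
  have hmin : min x k = x * min 1 (k / x) := by
    rw [mul_min_of_nonneg _ _ hx.le, mul_one, mul_div_cancel₀ _ hx.ne']
  rw [hpow, hmin, mul_comm (exp 1) x, mul_assoc]
  exact mul_le_mul_of_nonneg_left (min_one_le_exp_one_mul_one_sub_exp_neg (by positivity)) hx.le

lemma hasSum_pow_mul_exp_neg_mul_one_sub_pow (s t : ℝ) :
    HasSum (fun k : ℕ => s ^ k * exp (-s) * ((k.factorial : ℝ)⁻¹ * (1 - t ^ k)))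
      (1 - exp (-((1 - t) * s))) := by
  have hexp (r : ℝ) : HasSum (fun k : ℕ => r ^ k / k.factorial) (exp r) := by
    rw [exp_eq_exp_ℝ]; exact NormedSpace.expSeries_div_hasSum_exp r
  have h := ((hexp s).sub (hexp (t * s))).mul_right (exp (-s))
  rw [sub_mul, ← exp_add, ← exp_add, add_neg_cancel, exp_zero] at h
  convert! h using 1
  · ext k; ring
  · congr 2; ring

section Bernstein

variable {b : ℝ} {ν : Measure ℝ} {ψ : ℝ → ℝ}

lemma bernC_nonneg (hb : 0 ≤ b) (k : ℕ) : 0 ≤ bernC b ν k := by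
  have : 0 ≤ ∫ s in Ioi (0 : ℝ), s ^ k * exp (-s) ∂ν :=
    setIntegral_nonneg measurableSet_Ioi fun s (hs : 0 < s) => by positivity
  unfold bernC
  split_ifs <;> positivity

lemma stepPMF_nonneg {c : ℕ → ℝ} (hc : ∀ k, 0 ≤ c k) (k : ℕ) : 0 ≤ stepPMF c k := by
  unfold stepPMF
  split_ifs
  exacts [le_rfl, hc k]

lemma integrableOn_one_sub_exp_neg_mul (hν : IntegrableOn (fun s => min 1 s) (Ioi (0 : ℝ)) ν)
    {u : ℝ} (hu0 : 0 ≤ u) (hu1 : u ≤ 1) :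
    IntegrableOn (fun s => 1 - exp (-(u * s))) (Ioi (0 : ℝ)) ν := by
  refine hν.mono' (by fun_prop) ((ae_restrict_iff' measurableSet_Ioi).mpr (.of_forall ?_))
  intro s (hs : 0 < s)
  have hus : u * s ≤ s := mul_le_of_le_one_left hs.le hu1
  rw [norm_of_nonneg (sub_nonneg.mpr (exp_le_one_iff.mpr (neg_nonpos.mpr (by positivity))))]
  refine le_min (by linarith [exp_pos (-(u * s))]) ?_
  linarith [add_one_le_exp (-(u * s))]

lemma hasSum_bernC_mul_one_sub_pow (hν : IntegrableOn (fun s => min 1 s) (Ioi (0 : ℝ)) ν)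
    {t : ℝ} (ht0 : 0 ≤ t) (ht1 : t ≤ 1) :
    HasSum (fun k => bernC b ν k * (1 - t ^ k))
      (b * (1 - t) + ∫ s in Ioi (0 : ℝ), (1 - exp (-((1 - t) * s))) ∂ν) := by
  set F : ℕ → ℝ → ℝ := fun k s => s ^ k * exp (-s) * ((k.factorial : ℝ)⁻¹ * (1 - t ^ k))
  have hF : ∀ k, ∀ s ∈ Ioi (0 : ℝ), 0 ≤ F k s := fun k s (hs : 0 < s) => by
    have : t ^ k ≤ 1 := pow_le_one₀ ht0 ht1
    have : 0 ≤ 1 - t ^ k := by linarith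
    positivity
  have htsum : (fun s => ∑' k, F k s) = fun s => 1 - exp (-((1 - t) * s)) :=
    funext fun s => (hasSum_pow_mul_exp_neg_mul_one_sub_pow s t).tsum_eq
  have hint : HasSum (fun k => ∫ s in Ioi (0 : ℝ), F k s ∂ν)
      (∫ s in Ioi (0 : ℝ), (1 - exp (-((1 - t) * s))) ∂ν) := by
    refine hasSum_integral_of_dominated_convergence F (fun k => by fun_prop)
      (fun k => (ae_restrict_iff' measurableSet_Ioi).mpr (.of_forall fun s hs => ?_))
      (.of_forall fun s => (hasSum_pow_mul_exp_neg_mul_one_sub_pow s t).summable) ?_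
      (.of_forall fun s => hasSum_pow_mul_exp_neg_mul_one_sub_pow s t)
    · exact (norm_of_nonneg (hF k s hs)).le
    · rw [htsum]
      exact integrableOn_one_sub_exp_neg_mul hν (by linarith) (by linarith)
  convert (hasSum_ite_eq 1 (b * (1 - t))).add hint using 1
  funext k
  simp only [bernC, F, integral_mul_const]
  split_ifs with hk <;> simp [hk] <;> ring

lemma hasSum_stepPMF_bernC_mul_one_sub_pow
    (hν : IntegrableOn (fun s => min 1 s) (Ioi (0 : ℝ)) ν)
    (hψ : ∀ x : ℝ, 0 ≤ x → ψ x = b * x + ∫ s in Ioi (0 : ℝ), (1 - exp (-(x * s))) ∂ν)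
    {t : ℝ} (ht0 : 0 ≤ t) (ht1 : t ≤ 1) :
    HasSum (fun k => stepPMF (bernC b ν) k * (1 - t ^ k)) (ψ (1 - t)) := by
  rw [hψ _ (by linarith)]
  convert hasSum_bernC_mul_one_sub_pow hν ht0 ht1 using 2 with k
  rcases k with _ | k <;> simp [stepPMF]

lemma hasSum_stepPMF_bernC (hν : IntegrableOn (fun s => min 1 s) (Ioi (0 : ℝ)) ν)
    (hψ : ∀ x : ℝ, 0 ≤ x → ψ x = b * x + ∫ s in Ioi (0 : ℝ), (1 - exp (-(x * s))) ∂ν)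
    (hψ1 : ψ 1 = 1) :
    HasSum (stepPMF (bernC b ν)) 1 := by
  convert hasSum_stepPMF_bernC_mul_one_sub_pow hν hψ le_rfl zero_le_one using 1
  · ext k; rcases k with _ | k <;> simp [stepPMF]
  · rw [sub_zero, hψ1]

lemma hasSum_stepPMF_bernC_mul_pow (hν : IntegrableOn (fun s => min 1 s) (Ioi (0 : ℝ)) ν)
    (hψ : ∀ x : ℝ, 0 ≤ x → ψ x = b * x + ∫ s in Ioi (0 : ℝ), (1 - exp (-(x * s))) ∂ν)
    (hψ1 : ψ 1 = 1) {t : ℝ} (ht0 : 0 ≤ t) (ht1 : t ≤ 1) :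
    HasSum (fun k => stepPMF (bernC b ν) k * t ^ k) (1 - ψ (1 - t)) := by
  convert! (hasSum_stepPMF_bernC hν hψ hψ1).sub
    (hasSum_stepPMF_bernC_mul_one_sub_pow hν hψ ht0 ht1) using 1
  ext k; ring

end Bernstein

lemma tauPMF_nonneg {c : ℕ → ℝ} (hc : ∀ k, 0 ≤ stepPMF c k) (n k : ℕ) : 0 ≤ tauPMF c n k := by
  induction n generalizing k with
  | zero => unfold tauPMF; split_ifs <;> norm_num
  | succ n ih => exact Finset.sum_nonneg fun j _ => mul_nonneg (ih j) (hc _)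

lemma hasSum_tauPMF_mul_pow {c : ℕ → ℝ} {t G : ℝ}
    (hG : HasSum (fun k => stepPMF c k * t ^ k) G) (n : ℕ) :
    HasSum (fun k => tauPMF c n k * t ^ k) (G ^ n) := by
  induction n with
  | zero =>
    convert hasSum_ite_eq 0 (1 : ℝ) using 1
    · ext k; rcases k with _ | k <;> simp [tauPMF]
    · simp
  | succ n ih =>
    have h := hasSum_sum_range_mul_of_summable_norm (R := ℝ)
      (by simpa only [Real.norm_eq_abs] using ih.summable.abs)
      (by simpa only [Real.norm_eq_abs] using hG.summable.abs)
    rw [ih.tsum_eq, hG.tsum_eq, ← pow_succ] at h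
    convert! h using 2 with m
    simp only [tauPMF, Finset.sum_mul]
    refine Finset.sum_congr rfl fun j hj => ?_
    rw [← Nat.add_sub_of_le (Finset.mem_range_succ_iff.mp hj)]
    simp only [pow_add, Nat.add_sub_cancel_left]
    ring

lemma hasSum_indicator_Iio_tauPMF {c : ℕ → ℝ} {n : ℕ} (h1 : HasSum (tauPMF c n) 1)
    {y : ℝ} (hy : 0 ≤ y) :
    HasSum (fun k : ℕ => (Iio (k : ℝ)).indicator (fun _ => tauPMF c n k) y)
      (1 - cdfTau c n y) := by
  set s := Finset.range (⌊y⌋₊ + 1)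
  have hcompl : HasSum ((↑s : Set ℕ)ᶜ.indicator (tauPMF c n)) (1 - ∑ k ∈ s, tauPMF c n k) :=
    hasSum_subtype_iff_indicator.mp (s.hasSum_compl_iff.mpr (by simpa using h1))
  rw [cdfTau, if_neg hy.not_gt]
  convert hcompl using 2 with k
  have hmem : y ∈ Iio (k : ℝ) ↔ k ∈ (↑s : Set ℕ)ᶜ := by
    simp [s, ← Nat.floor_lt hy]
  by_cases hk : y ∈ Iio (k : ℝ)
  · rw [indicator_of_mem hk, indicator_of_mem (hmem.mp hk)]
  · rw [indicator_of_notMem hk, indicator_of_notMem (mt hmem.mpr hk)]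

lemma integral_indicator_Iio_const {x a : ℝ} (hx : 0 ≤ x) (ha : 0 ≤ a) (p : ℝ) :
    ∫ y in (0 : ℝ)..x, (Iio a).indicator (fun _ => p) y = p * min x a := by
  rw [intervalIntegral.integral_of_le hx, setIntegral_indicator measurableSet_Iio,
    setIntegral_const, measureReal_def,
    measure_congr ((ae_eq_refl (Ioc (0 : ℝ) x)).inter Iio_ae_eq_Iic), Ioc_inter_Iic,
    Real.volume_Ioc, sub_zero, ENNReal.toReal_ofReal (le_min hx ha), smul_eq_mul,
    mul_comm]

lemma hasSum_tauPMF_mul_min {c : ℕ → ℝ} {n : ℕ} (hp : ∀ k, 0 ≤ tauPMF c n k)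
    (h1 : HasSum (tauPMF c n) 1) {x : ℝ} (hx : 0 < x) :
    HasSum (fun k : ℕ => tauPMF c n k * min x k) (∫ y in (0 : ℝ)..x, (1 - cdfTau c n y)) := by
  have h := intervalIntegral.hasSum_integral_of_dominated_convergence (μ := volume)
    (F := fun (k : ℕ) y => (Iio (k : ℝ)).indicator (fun _ => tauPMF c n k) y)
    (fun (k : ℕ) _ => tauPMF c n k) (fun k => by fun_prop (disch := measurability))
    (fun k => .of_forall fun y _ =>
      (norm_indicator_le_norm_self _ _).trans (norm_of_nonneg (hp k)).le)
    (.of_forall fun _ _ => h1.summable) intervalIntegrable_const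
    (.of_forall fun y hy => hasSum_indicator_Iio_tauPMF h1 (uIoc_of_le hx.le ▸ hy).1.le)
  simpa only [integral_indicator_Iio_const hx.le (Nat.cast_nonneg _)] using h

theorem integral_tail_upper_bound_general
    (b : ℝ) (hb : 0 ≤ b) (ν : Measure ℝ)
    (hνfin : IntegrableOn (fun s => min 1 s) (Set.Ioi (0 : ℝ)) ν)
    (ψ : ℝ → ℝ)
    (hψ : ∀ x : ℝ, 0 ≤ x →
      ψ x = b * x + ∫ s in Set.Ioi (0 : ℝ), (1 - Real.exp (-(x * s))) ∂ν)
    (hψ1 : ψ 1 = 1)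
    :
    ∃ C : ℝ, 0 < C ∧ ∀ n : ℕ, 1 ≤ n → ∀ x : ℝ, 0 < x →
      (∫ y in (0 : ℝ)..x, (1 - cdfTau (bernC b ν) n y)) ≤
        C * x * n * ψ (1 - Real.exp (-(1 / x))) := by
  refine ⟨exp 1, exp_pos 1, fun n _ x hx => ?_⟩
  set q := exp (-(1 / x))
  have hq0 : 0 ≤ q := (exp_pos _).le
  have hq1 : q ≤ 1 := exp_le_one_iff.mpr (neg_nonpos.mpr (by positivity))
  have hstep : ∀ k, 0 ≤ stepPMF (bernC b ν) k := stepPMF_nonneg (bernC_nonneg hb)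
  have hp := tauPMF_nonneg hstep n
  have hG := hasSum_stepPMF_bernC_mul_pow hνfin hψ hψ1 hq0 hq1
  have hp1 : HasSum (tauPMF (bernC b ν) n) 1 := by
    convert! hasSum_tauPMF_mul_pow (t := 1) (by simpa using hasSum_stepPMF_bernC hνfin hψ hψ1) n
      using 1 <;> simp
  have hψq : ψ (1 - q) ≤ 1 :=
    sub_nonneg.mp (hG.nonneg fun k => mul_nonneg (hstep k) (pow_nonneg hq0 k))
  have hbound := (hp1.sub (hasSum_tauPMF_mul_pow hG n)).mul_left (exp 1 * x)
  calc ∫ y in (0 : ℝ)..x, (1 - cdfTau (bernC b ν) n y)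
      ≤ exp 1 * x * (1 - (1 - ψ (1 - q)) ^ n) :=
        hasSum_le (fun k => (mul_le_mul_of_nonneg_left
          (min_le_exp_one_mul_one_sub_exp_neg_inv_pow hx k) (hp k)).trans_eq (by ring))
          (hasSum_tauPMF_mul_min hp hp1 hx) hbound
    _ ≤ exp 1 * x * n * ψ (1 - q) := by
      have bernoulli := one_add_mul_le_pow (a := -ψ (1 - q)) (by linarith) n
      rw [← sub_eq_add_neg] at bernoulli
      rw [mul_assoc _ (n : ℝ)]
      exact mul_le_mul_of_nonneg_left (by linarith) (by positivity)

/-- There is `C > 0` (one may take `C = e`) such that for every `n ≥ 1` and `x > 0`,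
`ℱ_n(x) = ∫_0^x (1 - F_n(y)) dy ≤ C · x · n · ψ(1 - e^{-1/x})`. -/
theorem integral_tail_upper_bound
    (α : ℝ) (hα0 : 0 < α) (hα2 : α < 2)
    (b : ℝ) (hb : 0 ≤ b) (ν : Measure ℝ)
    (hνfin : IntegrableOn (fun s => min 1 s) (Set.Ioi (0 : ℝ)) ν)
    (ψ : ℝ → ℝ)
    (hψ : ∀ x : ℝ, 0 ≤ x →
      ψ x = b * x + ∫ s in Set.Ioi (0 : ℝ), (1 - Real.exp (-(x * s))) ∂ν)
    (hψ0 : ψ 0 = 0) (hψ1 : ψ 1 = 1)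
    :
    ∃ C : ℝ, 0 < C ∧ ∀ n : ℕ, 1 ≤ n → ∀ x : ℝ, 0 < x →
      (∫ y in (0 : ℝ)..x, (1 - cdfTau (bernC b ν) n y)) ≤
        C * x * n * ψ (1 - Real.exp (-(1 / x))) :=
  integral_tail_upper_bound_general b hb ν hνfin ψ hψ hψ1
end
end

section
/- Under the stated assumptions, for all ξ ∈ ℝ^d one has Φ_ψ(ξ) = 1 − ψ(1 − Φ(ξ)), where on the right-hand side ψ denotes its holomorphic extension to the closed right half-plane. (Lemma 4.4 of the paper.) -/
open MeasureTheory Filter Topology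

noncomputable section

/-- Holomorphic extension of the Bernstein function (with `a = 0`) to the closed right
half-plane: `ψ(z) = b z + ∫ (1 - e^{-z s}) dν(s)`. -/
def psiC (b : ℝ) (ν : MeasureTheory.Measure ℝ) (z : ℂ) : ℂ :=
  b * z + ∫ s in Set.Ioi (0 : ℝ), (1 - Complex.exp (-(z * (s : ℂ)))) ∂ν

/-- `n`-fold convolution power `p^{(n)}` of a density `p` on `ℤ^d`; `p^{(0)} = δ_0`. -/
def convPow {d : ℕ} (p : (Fin d → ℤ) → ℝ) : ℕ → (Fin d → ℤ) → ℝ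
  | 0 => fun x => if x = 0 then 1 else 0
  | n + 1 => fun x => ∑' y : Fin d → ℤ, convPow p n y * p (x - y)

/-- Characteristic function `Φ_q(ξ) = Σ_{x ∈ ℤ^d} q(x) e^{i⟨ξ,x⟩}` of a density `q` on `ℤ^d`. -/
def charFn {d : ℕ} (q : (Fin d → ℤ) → ℝ) (ξ : Fin d → ℝ) : ℂ :=
  ∑' x : Fin d → ℤ, (q x : ℂ) * Complex.exp (Complex.I * ((∑ i, ξ i * (x i : ℝ) : ℝ) : ℂ))

/-- One-step density of the subordinate random walk: `p_ψ(x) = Σ_{k ≥ 1} p(x,k) c(ψ,k)`. -/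
def subStep {d : ℕ} (p : (Fin d → ℤ) → ℝ) (c : ℕ → ℝ) (x : Fin d → ℤ) : ℝ :=
  ∑' k : ℕ, convPow p (k + 1) x * c (k + 1)

/-!
Write `Φ` for the characteristic function of `p`. Since `p_ψ = Σ_k c(ψ,k) p^{(k)}` and the
characteristic function turns convolution powers into powers, `Φ_ψ = Σ_k c(ψ,k) Φ^k`; the sums
may be interchanged because the `c(ψ,k)` are summable and `p^{(k)}` has mass one.
For `‖z‖ ≤ 1`, expanding `e^{zs} - 1` in powers of `zs` inside the Lévy integral gives
`Σ_k c(ψ,k) z^k = b z + ∫ (e^{-(1-z)s} - e^{-s}) dν(s) = ψ(1) - ψ(1 - z)`, by dominated convergence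
with dominating function `Σ_k s^k e^{-s} / k! = 1 - e^{-s} ≤ min(1, s)`. Take `z = Φ(ξ)` and
`ψ(1) = 1`.
-/

section CharFn

variable {d : ℕ}

def charExp (ξ : Fin d → ℝ) (x : Fin d → ℤ) : ℂ :=
  Complex.exp (Complex.I * ((∑ i, ξ i * (x i : ℝ) : ℝ) : ℂ))

theorem charFn_eq_tsum_charExp (q : (Fin d → ℤ) → ℝ) (ξ : Fin d → ℝ) :
    charFn q ξ = ∑' x, (q x : ℂ) * charExp ξ x :=
  rfl

theorem charExp_zero_left (x : Fin d → ℤ) : charExp 0 x = 1 := by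
  simp [charExp]

theorem charExp_zero_right (ξ : Fin d → ℝ) : charExp ξ 0 = 1 := by
  simp [charExp]

theorem charExp_add (ξ : Fin d → ℝ) (x y : Fin d → ℤ) :
    charExp ξ (x + y) = charExp ξ x * charExp ξ y := by
  simp only [charExp, ← Complex.exp_add, ← mul_add]
  push_cast
  simp [mul_add, Finset.sum_add_distrib]

theorem norm_charExp (ξ : Fin d → ℝ) (x : Fin d → ℤ) : ‖charExp ξ x‖ = 1 := by
  simp [charExp, Complex.norm_exp]

theorem norm_ofReal_mul_charExp (r : ℝ) (ξ : Fin d → ℝ) (x : Fin d → ℤ) :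
    ‖(r : ℂ) * charExp ξ x‖ = ‖r‖ := by
  rw [norm_mul, norm_charExp, mul_one, Complex.norm_real]

theorem summable_ofReal_mul_charExp {q : (Fin d → ℤ) → ℝ} (hq : Summable q) (ξ : Fin d → ℝ) :
    Summable fun x => (q x : ℂ) * charExp ξ x :=
  Summable.of_norm (by simpa only [norm_ofReal_mul_charExp] using hq.norm)

theorem charFn_zero (q : (Fin d → ℤ) → ℝ) : charFn q 0 = ((∑' x, q x : ℝ) : ℂ) := by
  simp [charFn_eq_tsum_charExp, charExp_zero_left, Complex.ofReal_tsum]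

theorem norm_charFn_le_one {p : (Fin d → ℤ) → ℝ} (hp0 : ∀ x, 0 ≤ p x) (hp : HasSum p 1)
    (ξ : Fin d → ℝ) : ‖charFn p ξ‖ ≤ 1 :=
  (charFn_eq_tsum_charExp p ξ) ▸ tsum_of_norm_bounded hp fun x => by
    rw [norm_ofReal_mul_charExp, Real.norm_of_nonneg (hp0 x)]

end CharFn

section Convolution

variable {G : Type*} [AddGroup G] {p q : G → ℝ}

def convReindex (G : Type*) [AddGroup G] : G × G ≃ G × G :=
  (Equiv.prodShear (Equiv.refl G) Equiv.addRight).trans (Equiv.prodComm G G)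

@[simp]
theorem convReindex_apply (yz : G × G) : convReindex G yz = (yz.2 + yz.1, yz.1) :=
  rfl

theorem summable_conv_prod (hp : Summable p) (hq : Summable q) :
    Summable fun xy : G × G => q xy.2 * p (xy.1 - xy.2) := by
  rw [← (convReindex G).summable_iff]
  simpa [Function.comp_def] using summable_mul_of_summable_norm hq.norm hp.norm

theorem summable_conv (hp : Summable p) (hq : Summable q) :
    Summable fun x => ∑' y, q y * p (x - y) :=
  (summable_conv_prod hp hq).prod

end Convolution

section ConvPow

variable {d : ℕ} {p q : (Fin d → ℤ) → ℝ}

theorem charFn_conv (hp : Summable p) (hq : Summable q) (ξ : Fin d → ℝ) :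
    charFn (fun x => ∑' y, q y * p (x - y)) ξ = charFn q ξ * charFn p ξ := by
  let f : (Fin d → ℤ) × (Fin d → ℤ) → ℂ :=
    fun xy => (q xy.2 * p (xy.1 - xy.2) : ℝ) * charExp ξ xy.1
  have hf : Summable f := Summable.of_norm_bounded (summable_conv_prod hp hq).norm fun xy =>
    (norm_ofReal_mul_charExp _ ξ xy.1).le
  calc charFn (fun x => ∑' y, q y * p (x - y)) ξ = ∑' x, ∑' y, f (x, y) := by
        simp only [f, charFn_eq_tsum_charExp, Complex.ofReal_tsum, ← tsum_mul_right]
    _ = ∑' xy, f xy := hf.tsum_prod.symm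
    _ = ∑' yz, f (convReindex _ yz) := ((convReindex _).tsum_eq f).symm
    _ = ∑' yz : (Fin d → ℤ) × (Fin d → ℤ),
          ((q yz.1 : ℂ) * charExp ξ yz.1) * ((p yz.2 : ℂ) * charExp ξ yz.2) := by
        refine tsum_congr fun yz => ?_
        simp only [f, convReindex_apply, add_sub_cancel_right, charExp_add, Complex.ofReal_mul]
        ring
    _ = charFn q ξ * charFn p ξ := (tsum_mul_tsum_of_summable_norm
          (summable_ofReal_mul_charExp hq ξ).norm (summable_ofReal_mul_charExp hp ξ).norm).symm

theorem convPow_nonneg (hp0 : ∀ x, 0 ≤ p x) : ∀ n x, 0 ≤ convPow p n x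
  | 0, x => by by_cases hx : x = 0 <;> simp [convPow, hx]
  | n + 1, x => tsum_nonneg fun y => mul_nonneg (convPow_nonneg hp0 n y) (hp0 _)

theorem summable_convPow (hp : Summable p) : ∀ n, Summable (convPow p n)
  | 0 => (hasSum_ite_eq 0 1).summable
  | n + 1 => summable_conv hp (summable_convPow hp n)

theorem charFn_convPow (hp : Summable p) (ξ : Fin d → ℝ) :
    ∀ n, charFn (convPow p n) ξ = charFn p ξ ^ n
  | 0 => by
    simp [charFn_eq_tsum_charExp, convPow, apply_ite Complex.ofReal, ite_mul, charExp_zero_right]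
  | n + 1 => by
    rw [pow_succ, ← charFn_convPow hp ξ n]
    exact charFn_conv hp (summable_convPow hp n) ξ

theorem tsum_convPow (hp : Summable p) (n : ℕ) : ∑' x, convPow p n x = (∑' x, p x) ^ n := by
  have h := charFn_convPow hp 0 n
  rw [charFn_zero, charFn_zero] at h
  exact_mod_cast h

theorem charFn_subStep (hp0 : ∀ x, 0 ≤ p x) (hp : HasSum p 1) {c : ℕ → ℝ}
    (hc : Summable fun k => c (k + 1)) (ξ : Fin d → ℝ) :
    charFn (subStep p c) ξ = ∑' k, (c (k + 1) : ℂ) * charFn p ξ ^ (k + 1) := by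
  let f : ℕ → (Fin d → ℤ) → ℂ :=
    fun k x => (c (k + 1) : ℂ) * ((convPow p (k + 1) x : ℂ) * charExp ξ x)
  have hbound :
      Summable fun kx : ℕ × (Fin d → ℤ) => |c (kx.1 + 1)| * convPow p (kx.1 + 1) kx.2 := by
    refine (summable_prod_of_nonneg fun kx => mul_nonneg (abs_nonneg _)
      (convPow_nonneg hp0 _ _)).2
      ⟨fun k => (summable_convPow hp.summable (k + 1)).mul_left |c (k + 1)|, ?_⟩
    simpa only [tsum_mul_left, tsum_convPow hp.summable, hp.tsum_eq, one_pow, mul_one] using hc.abs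
  have hf : Summable (Function.uncurry f) := hbound.of_norm_bounded fun kx => by
    simp only [Function.uncurry, f, norm_mul, norm_charExp, mul_one, Complex.norm_real,
      Real.norm_eq_abs, abs_of_nonneg (convPow_nonneg hp0 _ _), le_refl]
  calc charFn (subStep p c) ξ = ∑' x, ∑' k, f k x := by
        refine tsum_congr fun x => ?_
        rw [subStep, Complex.ofReal_tsum, ← tsum_mul_right]
        refine tsum_congr fun k => ?_
        simp only [f, charExp, Complex.ofReal_mul]
        ring
    _ = ∑' k, ∑' x, f k x := hf.tsum_comm
    _ = ∑' k, (c (k + 1) : ℂ) * charFn p ξ ^ (k + 1) := by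
        simp only [f, tsum_mul_left, ← charFn_eq_tsum_charExp, charFn_convPow hp.summable]

end ConvPow

theorem hasSum_pow_succ_div_factorial {𝔸 : Type*} [NormedDivisionRing 𝔸] [NormedAlgebra ℚ 𝔸]
    [CompleteSpace 𝔸] (x : 𝔸) :
    HasSum (fun k : ℕ => x ^ (k + 1) / ((k + 1).factorial : 𝔸)) (NormedSpace.exp x - 1) := by
  simpa using (hasSum_nat_add_iff' 1).2 (NormedSpace.expSeries_div_hasSum_exp x)

theorem hasSum_pow_succ_div_factorial_mul_exp_neg (s : ℝ) :
    HasSum (fun k : ℕ => s ^ (k + 1) / (k + 1).factorial * Real.exp (-s)) (1 - Real.exp (-s)) := by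
  have h := (hasSum_pow_succ_div_factorial s).mul_right (Real.exp (-s))
  rwa [← Real.exp_eq_exp_ℝ, sub_mul, ← Real.exp_add, add_neg_cancel, Real.exp_zero, one_mul] at h

theorem hasSum_mul_pow_succ_div_factorial_mul_cexp_neg (z : ℂ) (s : ℝ) :
    HasSum (fun k : ℕ => (z * s) ^ (k + 1) / (k + 1).factorial * Complex.exp (-s))
      (Complex.exp (-((1 - z) * s)) - Complex.exp (-s)) := by
  have h := (hasSum_pow_succ_div_factorial (z * s)).mul_right (Complex.exp (-s))
  rwa [← Complex.exp_eq_exp_ℂ, sub_mul, ← Complex.exp_add, one_mul,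
    show z * s + -s = -((1 - z) * s) by ring] at h

theorem norm_mul_pow_succ_div_factorial_mul_cexp_neg_le {z : ℂ} (hz : ‖z‖ ≤ 1) {s : ℝ}
    (hs : 0 ≤ s) (k : ℕ) :
    ‖(z * s) ^ (k + 1) / (k + 1).factorial * Complex.exp (-s)‖
      ≤ s ^ (k + 1) / (k + 1).factorial * Real.exp (-s) := by
  have hzk : ‖z‖ ^ (k + 1) ≤ 1 := pow_le_one₀ (norm_nonneg z) hz
  rw [norm_mul, norm_div, norm_pow, norm_mul, Complex.norm_real, Real.norm_of_nonneg hs,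
    Complex.norm_natCast, ← Complex.ofReal_neg, Complex.norm_exp_ofReal, mul_pow]
  gcongr
  exact mul_le_of_le_one_left (by positivity) hzk

theorem norm_cexp_sub_exp_neg_le {z : ℂ} (hz : ‖z‖ ≤ 1) {s : ℝ} (hs : 0 ≤ s) :
    ‖Complex.exp (-((1 - z) * s)) - Complex.exp (-s)‖ ≤ 1 - Real.exp (-s) :=
  (hasSum_mul_pow_succ_div_factorial_mul_cexp_neg z s).norm_le_of_bounded
    (hasSum_pow_succ_div_factorial_mul_exp_neg s)
    (norm_mul_pow_succ_div_factorial_mul_cexp_neg_le hz hs)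

def levyCoeff (ν : Measure ℝ) (k : ℕ) : ℝ :=
  ((k.factorial : ℝ))⁻¹ * ∫ s in Set.Ioi (0 : ℝ), s ^ k * Real.exp (-s) ∂ν

theorem bernC_succ (b : ℝ) (ν : Measure ℝ) (k : ℕ) :
    bernC b ν (k + 1) = levyCoeff ν (k + 1) + if k = 0 then b else 0 := by
  simp [bernC, levyCoeff]

theorem psiC_ofReal (b : ℝ) (ν : Measure ℝ) (x : ℝ) :
    psiC b ν x = ((b * x + ∫ s in Set.Ioi 0, (1 - Real.exp (-(x * s))) ∂ν : ℝ) : ℂ) := by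
  rw [psiC, Complex.ofReal_add, Complex.ofReal_mul, ← integral_complex_ofReal]
  push_cast
  rfl

section Levy

variable {ν : Measure ℝ}

theorem integrableOn_one_sub_exp_neg (hν : IntegrableOn (fun s => min 1 s) (Set.Ioi 0) ν) :
    IntegrableOn (fun s => 1 - Real.exp (-s)) (Set.Ioi 0) ν := by
  refine hν.mono' (by fun_prop) (ae_restrict_of_forall_mem measurableSet_Ioi fun s hs => ?_)
  rw [Real.norm_of_nonneg (by simpa using le_of_lt hs)]
  exact le_min (by linarith [Real.exp_pos (-s)]) (by linarith [Real.one_sub_le_exp_neg s])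

theorem integrableOn_cexp_sub_exp_neg (hν : IntegrableOn (fun s => min 1 s) (Set.Ioi 0) ν)
    {z : ℂ} (hz : ‖z‖ ≤ 1) :
    IntegrableOn (fun s : ℝ => Complex.exp (-((1 - z) * s)) - Complex.exp (-s)) (Set.Ioi 0) ν :=
  (integrableOn_one_sub_exp_neg hν).mono' (by fun_prop)
    (ae_restrict_of_forall_mem measurableSet_Ioi fun _ hs =>
      norm_cexp_sub_exp_neg_le hz (le_of_lt hs))

theorem hasSum_levyCoeff_mul_pow (hν : IntegrableOn (fun s => min 1 s) (Set.Ioi 0) ν)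
    {z : ℂ} (hz : ‖z‖ ≤ 1) :
    HasSum (fun k : ℕ => (levyCoeff ν (k + 1) : ℂ) * z ^ (k + 1))
      (∫ s in Set.Ioi 0, (Complex.exp (-((1 - z) * s)) - Complex.exp (-s)) ∂ν) := by
  have hterm : ∀ k : ℕ, (levyCoeff ν (k + 1) : ℂ) * z ^ (k + 1)
      = ∫ s in Set.Ioi 0, (z * s) ^ (k + 1) / (k + 1).factorial * Complex.exp (-s) ∂ν := by
    intro k
    have : ∀ s : ℝ, (z * s) ^ (k + 1) / (k + 1).factorial * Complex.exp (-s)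
        = z ^ (k + 1) / (k + 1).factorial * ((s ^ (k + 1) * Real.exp (-s) : ℝ) : ℂ) := by
      intro s; push_cast; ring
    rw [setIntegral_congr_fun measurableSet_Ioi fun s _ => this s, integral_const_mul,
      integral_complex_ofReal, levyCoeff]
    push_cast
    ring
  simp only [hterm]
  refine hasSum_integral_of_dominated_convergence
    (fun k s => s ^ (k + 1) / (k + 1).factorial * Real.exp (-s)) (fun k => by fun_prop)
    (fun k => ae_restrict_of_forall_mem measurableSet_Ioi fun s hs =>
      norm_mul_pow_succ_div_factorial_mul_cexp_neg_le hz (le_of_lt hs) k)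
    (ae_of_all _ fun s => (hasSum_pow_succ_div_factorial_mul_exp_neg s).summable) ?_
    (ae_of_all _ fun s => hasSum_mul_pow_succ_div_factorial_mul_cexp_neg z s)
  simp only [(hasSum_pow_succ_div_factorial_mul_exp_neg _).tsum_eq]
  exact integrableOn_one_sub_exp_neg hν

theorem hasSum_bernC_mul_pow (b : ℝ) (hν : IntegrableOn (fun s => min 1 s) (Set.Ioi 0) ν)
    {z : ℂ} (hz : ‖z‖ ≤ 1) :
    HasSum (fun k : ℕ => (bernC b ν (k + 1) : ℂ) * z ^ (k + 1))
      (b * z + ∫ s in Set.Ioi 0, (Complex.exp (-((1 - z) * s)) - Complex.exp (-s)) ∂ν) := by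
  convert (hasSum_ite_eq 0 ((b : ℂ) * z)).add (hasSum_levyCoeff_mul_pow hν hz) using 1
  funext k
  rcases k with _ | k
  · simp [bernC_succ]
    ring
  · simp [bernC_succ]

theorem summable_bernC_succ (b : ℝ) (hν : IntegrableOn (fun s => min 1 s) (Set.Ioi 0) ν) :
    Summable fun k => bernC b ν (k + 1) :=
  Complex.summable_ofReal.1 <| by
    simpa using (hasSum_bernC_mul_pow b hν (z := 1) (by simp)).summable

theorem psiC_one_sub_psiC_one_sub (b : ℝ) (hν : IntegrableOn (fun s => min 1 s) (Set.Ioi 0) ν)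
    {z : ℂ} (hz : ‖z‖ ≤ 1) :
    psiC b ν 1 - psiC b ν (1 - z)
      = b * z + ∫ s in Set.Ioi 0, (Complex.exp (-((1 - z) * s)) - Complex.exp (-s)) ∂ν := by
  have h1 : IntegrableOn (fun s : ℝ => 1 - Complex.exp (-(1 * s))) (Set.Ioi 0) ν := by
    have h : IntegrableOn (fun s : ℝ => ((1 - Real.exp (-s) : ℝ) : ℂ)) (Set.Ioi 0) ν :=
      (integrableOn_one_sub_exp_neg hν).ofReal
    push_cast at h
    simpa only [one_mul] using h
  have hD := integrableOn_cexp_sub_exp_neg hν hz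
  have hB : IntegrableOn (fun s : ℝ => 1 - Complex.exp (-((1 - z) * s))) (Set.Ioi 0) ν :=
    (h1.sub hD).congr_fun (fun _ _ => by simp only [Pi.sub_apply, one_mul]; ring)
      measurableSet_Ioi
  have hsplit : ∫ s in Set.Ioi 0, (Complex.exp (-((1 - z) * s)) - Complex.exp (-s)) ∂ν
      = (∫ s in Set.Ioi 0, (1 - Complex.exp (-(1 * s))) ∂ν)
        - ∫ s in Set.Ioi 0, (1 - Complex.exp (-((1 - z) * s))) ∂ν := by
    rw [← integral_sub h1 hB]
    exact setIntegral_congr_fun measurableSet_Ioi fun s _ => by simp only [one_mul]; ring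
  rw [psiC, psiC, hsplit]
  ring

end Levy

theorem charFn_of_subordinate_walk_general
    (b : ℝ) (ν : Measure ℝ)
    (hνfin : IntegrableOn (fun s => min 1 s) (Set.Ioi (0 : ℝ)) ν)
    (ψ : ℝ → ℝ)
    (hψ : ∀ x : ℝ, 0 ≤ x →
      ψ x = b * x + ∫ s in Set.Ioi (0 : ℝ), (1 - Real.exp (-(x * s))) ∂ν)
    (hψ1 : ψ 1 = 1)
    (d : ℕ) (p : (Fin d → ℤ) → ℝ)
    (hp0 : ∀ x, 0 ≤ p x) (hp1 : ∑' x : Fin d → ℤ, p x = 1)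
    (ξ : Fin d → ℝ) :
    charFn (subStep p (bernC b ν)) ξ = 1 - psiC b ν (1 - charFn p ξ) := by
  have hp : HasSum p 1 := by
    refine hp1 ▸ (Summable.hasSum ?_)
    by_contra h
    simp [tsum_eq_zero_of_not_summable h] at hp1
  have hpsi1 : psiC b ν 1 = 1 := by
    have h := psiC_ofReal b ν 1
    rwa [← hψ 1 zero_le_one, hψ1, Complex.ofReal_one] at h
  have hΦ := norm_charFn_le_one hp0 hp ξ
  rw [charFn_subStep hp0 hp (summable_bernC_succ b hνfin) ξ,
    (hasSum_bernC_mul_pow b hνfin hΦ).tsum_eq, ← psiC_one_sub_psiC_one_sub b hνfin hΦ, hpsi1]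

/-- Lemma 4.4: `Φ_ψ(ξ) = 1 - ψ(1 - Φ(ξ))` for all `ξ ∈ ℝ^d`, where on the right-hand side
`ψ` denotes its holomorphic extension to the closed right half-plane. -/
theorem charFn_of_subordinate_walk
    (α : ℝ) (hα0 : 0 < α) (hα2 : α < 2)
    (b : ℝ) (hb : 0 ≤ b) (ν : Measure ℝ)
    (hνfin : IntegrableOn (fun s => min 1 s) (Set.Ioi (0 : ℝ)) ν)
    (ψ : ℝ → ℝ)
    (hψ : ∀ x : ℝ, 0 ≤ x →
      ψ x = b * x + ∫ s in Set.Ioi (0 : ℝ), (1 - Real.exp (-(x * s))) ∂ν)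
    (hψ0 : ψ 0 = 0) (hψ1 : ψ 1 = 1)
    (d : ℕ) (hd : 1 ≤ d) (p : (Fin d → ℤ) → ℝ)
    (hp0 : ∀ x, 0 ≤ p x) (hp1 : ∑' x : Fin d → ℤ, p x = 1)
    (ξ : Fin d → ℝ) :
    charFn (subStep p (bernC b ν)) ξ = 1 - psiC b ν (1 - charFn p ξ) :=
  charFn_of_subordinate_walk_general b ν hνfin ψ hψ hψ1 d p hp0 hp1 ξ
end
end
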